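/- arXiv:1012.1785 — 8 statements merged into one kernel-verified Lean document; each statement's English description precedes it below -/
import Mathlib

section
/- Let Γ be a finitely generated residually finite group with no non-trivial finite normal subgroup. If φ : Γ → Γ is an endomorphism with image of finite index, then φ is injective. -/
/-!
Let `K = ker φ` and `d = [Γ : φ(Γ)]`. For every `φ`-invariant normal subgroup `W` of finite
index, `φ` induces an endomorphism `ψ` of the finite group `Γ / W` whose kernel contains the
image of `K`, so `[K : K ∩ W] ≤ |ker ψ| = [Γ/W : ψ(Γ/W)] ≤ d`. These indices being bounded,
one such `W₀` maximises `[K : K ∩ W₀]`, and then `K ∩ W₀ ≤ W` for every other such `W`.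
Residual finiteness, together with finite generation (which makes the invariant core
`⋂ⱼ φ⁻ʲ(N)` of a finite-index normal `N` an intersection of finitely many kernels), shows that
these `W` intersect trivially. Hence `K` embeds in `Γ / W₀`, is a finite normal subgroup,
and is trivial.
-/

/-- A group is *residually finite* if every non-trivial element survives in
some finite quotient, i.e. lies outside some normal subgroup of finite index. -/
def ResiduallyFinite (Γ : Type*) [Group Γ] : Prop :=
  ∀ g : Γ, g ≠ 1 → ∃ N : Subgroup Γ, N.Normal ∧ N.FiniteIndex ∧ g ∉ N

open Subgroup

instance MonoidHom.finite_of_fg {G Q : Type*} [Group G] [Group Q] [Group.FG G] [Finite Q] :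
    Finite (G →* Q) := by
  obtain ⟨S, hS, hSfin⟩ := Group.fg_iff.mp ‹Group.FG G›
  have := hSfin.to_subtype
  refine Finite.of_injective (fun f : G →* Q => fun s : S => f s) fun f g hfg => ?_
  exact MonoidHom.eq_of_eqOn_dense hS fun x hx => congrFun hfg ⟨x, hx⟩

namespace Subgroup

variable {G : Type*} [Group G]

theorem finite_of_disjoint_of_finiteIndex {K W : Subgroup G} [W.FiniteIndex]
    (h : Disjoint K W) : Finite K := by
  refine Finite.of_injective (fun k : K => (k : G ⧸ W)) fun x y hxy => ?_
  have hmem : (x : G)⁻¹ * y ∈ K ⊓ W :=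
    ⟨K.mul_mem (K.inv_mem x.2) y.2, QuotientGroup.eq.mp hxy⟩
  rw [h.eq_bot, mem_bot, inv_mul_eq_one] at hmem
  exact Subtype.ext hmem

section invariantCore

/-- The largest `φ`-invariant subgroup contained in `H`. -/
def invariantCore (φ : Monoid.End G) (H : Subgroup G) : Subgroup G :=
  ⨅ j : ℕ, H.comap (φ ^ j)

variable (φ : Monoid.End G) (H : Subgroup G)

theorem mem_invariantCore {x : G} :
    x ∈ H.invariantCore φ ↔ ∀ j : ℕ, (φ ^ j) x ∈ H := by
  simp only [invariantCore, mem_iInf]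
  rfl

theorem invariantCore_le : H.invariantCore φ ≤ H := fun _ hx =>
  (mem_invariantCore φ H).mp hx 0

theorem invariantCore_le_comap : H.invariantCore φ ≤ (H.invariantCore φ).comap φ :=
  fun _ hx => (mem_invariantCore φ H).mpr fun j => by
    have hφx := (mem_invariantCore φ H).mp hx (j + 1)
    rwa [pow_succ] at hφx

instance normal_invariantCore [H.Normal] : (H.invariantCore φ).Normal :=
  normal_iInf_normal fun _ => inferInstance

instance finiteIndex_invariantCore [Group.FG G] [H.Normal] [H.FiniteIndex] :
    (H.invariantCore φ).FiniteIndex := by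
  let F : ℕ → (G →* G ⧸ H) := fun j => (QuotientGroup.mk' H).comp (φ ^ j)
  have hF : H.invariantCore φ = ⨅ f : Set.range F, f.1.ker := by
    rw [iInf_range' (fun f => MonoidHom.ker f) F, invariantCore]
    exact iInf_congr fun j => SetLike.ext fun x =>
      (QuotientGroup.eq_one_iff ((φ ^ j) x)).symm
  rw [hF]
  exact finiteIndex_iInf fun f => finiteIndex_ker f.1

end invariantCore

theorem relIndex_ker_le_index_range (φ : G →* G) [φ.range.FiniteIndex] (W : Subgroup G)
    [W.Normal] [W.FiniteIndex] (hW : W ≤ W.comap φ) : W.relIndex φ.ker ≤ φ.range.index := by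
  let ψ : G ⧸ W →* G ⧸ W := QuotientGroup.map W W φ hW
  have hker : φ.ker.map (QuotientGroup.mk' W) ≤ ψ.ker := by
    rintro _ ⟨k, hk, rfl⟩
    simp only [MonoidHom.mem_ker, ψ, QuotientGroup.map_mk', (MonoidHom.mem_ker).mp hk,
      QuotientGroup.mk_one]
  have hrange : φ.range.map (QuotientGroup.mk' W) ≤ ψ.range := by
    rintro _ ⟨_, ⟨x, rfl⟩, rfl⟩
    exact ⟨x, rfl⟩
  calc W.relIndex φ.ker = Nat.card (φ.ker.map (QuotientGroup.mk' W)) := by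
        rw [← relIndex_ker, QuotientGroup.ker_mk']
    _ ≤ Nat.card ψ.ker := card_le_of_le hker
    _ = ψ.range.index := index_range.symm
    _ ≤ φ.range.index := Nat.le_of_dvd (Nat.pos_of_ne_zero FiniteIndex.index_ne_zero)
        ((index_dvd_of_le hrange).trans (index_map_dvd _ (QuotientGroup.mk'_surjective W)))

theorem exists_inf_le_of_relIndex_le (K : Subgroup G) {P : Subgroup G → Prop}
    (hP : ∃ W, P W) (hinf : ∀ W₁ W₂, P W₁ → P W₂ → P (W₁ ⊓ W₂))
    (hne : ∀ W, P W → W.relIndex K ≠ 0) {n : ℕ} (hbdd : ∀ W, P W → W.relIndex K ≤ n) :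
    ∃ W₀, P W₀ ∧ ∀ W, P W → W₀ ⊓ K ≤ W := by
  obtain ⟨W₀, hW₀, hmax⟩ : ∃ W₀, P W₀ ∧ ∀ W, P W → W.relIndex K ≤ W₀.relIndex K := by
    have hS : BddAbove ((relIndex · K) '' {W | P W}) :=
      ⟨n, by rintro _ ⟨W, hW, rfl⟩; exact hbdd W hW⟩
    obtain ⟨W, hW⟩ := hP
    obtain ⟨W₀, hW₀, hsup⟩ := Nat.sSup_mem (Set.Nonempty.image _ ⟨W, hW⟩) hS
    exact ⟨W₀, hW₀, fun W hW => (le_csSup hS ⟨W, hW, rfl⟩).trans_eq hsup.symm⟩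
  -- `[K : W ⊓ W₀ ⊓ K] = [W₀ ⊓ K : W ⊓ W₀ ⊓ K] * [K : W₀ ⊓ K]`, and by maximality of `W₀`
  -- the left side is at most the last factor, so the middle one is `1`.
  refine ⟨W₀, hW₀, fun W hW => relIndex_eq_one.mp ?_⟩
  have hmul := relIndex_inf_mul_relIndex W W₀ K
  have hle := hmax _ (hinf W W₀ hW hW₀)
  have hpos := Nat.pos_of_ne_zero (hne _ (hinf W W₀ hW hW₀))
  have h₀ := Nat.pos_of_ne_zero (hne _ hW₀)
  rw [← hmul] at hle hpos
  have : W.relIndex (W₀ ⊓ K) ≤ 1 := Nat.le_of_mul_le_mul_right (by simpa using hle) h₀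
  have : 0 < W.relIndex (W₀ ⊓ K) := Nat.pos_of_mul_pos_right hpos
  omega

end Subgroup

/-- Hirshon's lemma: if `Γ` is a finitely generated residually finite group
with no non-trivial finite normal subgroup, then any endomorphism of `Γ`
whose image has finite index is injective. -/
theorem hirshon (Γ : Type*) [Group Γ] [Group.FG Γ]
    (hrf : ResiduallyFinite Γ)
    (hnofin : ∀ N : Subgroup Γ, N.Normal → Finite N → N = ⊥)
    (φ : Γ →* Γ) (hfi : φ.range.FiniteIndex) :
    Function.Injective φ := by
  obtain ⟨W₀, ⟨_, _, -⟩, hW₀⟩ := φ.ker.exists_inf_le_of_relIndex_le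
    (P := fun W => W.Normal ∧ W.FiniteIndex ∧ W ≤ W.comap φ)
    ⟨⊤, inferInstance, inferInstance, le_top⟩
    (fun W₁ W₂ ⟨_, _, h₁⟩ ⟨_, _, h₂⟩ =>
      ⟨inferInstance, inferInstance, (inf_le_inf h₁ h₂).trans_eq (comap_inf W₁ W₂ φ).symm⟩)
    (fun _ ⟨_, _, _⟩ => isFiniteRelIndex_of_finiteIndex.relIndex_ne_zero)
    (fun W ⟨_, _, hW⟩ => relIndex_ker_le_index_range φ W hW)
  have hdisj : Disjoint φ.ker W₀ := by
    refine disjoint_iff_inf_le.mpr fun x ⟨hxK, hxW⟩ => mem_bot.mpr ?_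
    by_contra hx
    obtain ⟨N, _, _, hxN⟩ := hrf x hx
    exact hxN <| invariantCore_le φ N <| hW₀ _ ⟨normal_invariantCore φ N,
      finiteIndex_invariantCore φ N, invariantCore_le_comap φ N⟩ ⟨hxW, hxK⟩
  have := finite_of_disjoint_of_finiteIndex hdisj
  exact (MonoidHom.ker_eq_bot_iff φ).mp (hnofin _ inferInstance this)
end

section
/- Let Γ be a torsion-free group and φ : Γ → Γ a non-injective endomorphism such that φ^i(Γ) has finite index in Γ for all i ≥ 0. Then the kernels ker(φ) ⊆ ker(φ²) ⊆ ker(φ³) ⊆ ... are all distinct, i.e., the inclusions are strict. -/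
/-- A monoid is torsion-free if no element except `1` has finite order
(the definition of `Monoid.IsTorsionFree` in Mathlib of December 2024). -/
def Monoid.IsTorsionFree (G : Type*) [Monoid G] : Prop :=
  ∀ g : G, g ≠ 1 → ¬IsOfFinOrder g

/-!
If `ker φ^i = ker φ^(i+1)`, then `ker φ ∩ range φ^i` is trivial: for `x ∈ ker φ` with
`x ^ n = φ^i y` we get `φ^(i+1) y = φ (x ^ n) = 1`, so `y ∈ ker φ^i` and `x ^ n = 1`.
Since `range φ^i` has finite index, every `x` has a positive power in it, so a nontrivial
`x ∈ ker φ` would be a torsion element.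
-/

namespace Monoid.End

variable {G : Type*} [Group G] (φ : Monoid.End G)

theorem pow_succ_apply (i : ℕ) (x : G) : (φ ^ (i + 1)) x = φ ((φ ^ i) x) := by
  rw [pow_succ']
  rfl

theorem ker_pow_le_ker_pow_succ (i : ℕ) : (φ ^ i).ker ≤ (φ ^ (i + 1)).ker := by
  intro x (hx : (φ ^ i) x = 1)
  show (φ ^ (i + 1)) x = 1
  rw [pow_succ_apply, hx, map_one]

theorem eq_one_of_mem_ker_of_mem_range_pow {i : ℕ} (hker : (φ ^ (i + 1)).ker ≤ (φ ^ i).ker)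
    {x : G} (hx : φ x = 1) (hrange : x ∈ (φ ^ i).range) : x = 1 := by
  obtain ⟨y, rfl⟩ := hrange
  have hy : (φ ^ (i + 1)) y = 1 := by rwa [pow_succ_apply]
  exact hker hy

end Monoid.End

/-- Let `Γ` be a torsion-free group and `φ` a non-injective endomorphism such
that the image of every iterate `φ^i` has finite index in `Γ`.  Then the
kernels of the iterates form a strictly increasing chain:
`ker φ ⊊ ker φ² ⊊ ker φ³ ⊊ …`. -/
theorem kernels_strictly_increasing (Γ : Type*) [Group Γ]
    (htf : Monoid.IsTorsionFree Γ) (φ : Monoid.End Γ)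
    (hni : ¬ Function.Injective φ)
    (hfi : ∀ i : ℕ, (φ ^ i : Monoid.End Γ).range.FiniteIndex) :
    ∀ i : ℕ, ((φ ^ i : Monoid.End Γ)).ker < ((φ ^ (i + 1) : Monoid.End Γ)).ker := by
  intro i
  obtain ⟨x, hx, hx1⟩ : ∃ x : Γ, φ x = 1 ∧ x ≠ 1 := by
    simpa [injective_iff_map_eq_one] using hni
  refine (φ.ker_pow_le_ker_pow_succ i).lt_of_not_ge fun hker => htf x hx1 ?_
  obtain ⟨n, hn, -, hxn⟩ := Subgroup.exists_pow_mem_of_index_ne_zero (hfi i).index_ne_zero x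
  have hxn1 : x ^ n = 1 :=
    φ.eq_one_of_mem_ker_of_mem_range_pow hker (by rw [map_pow, hx, one_pow]) hxn
  exact isOfFinOrder_iff_pow_eq_one.2 ⟨n, hn, hxn1⟩
end

section
/- A torsion-free group with a non-zero, isomorphism-invariant, multiplicative volume-type invariant that is residually finite and finitely generated is cofinitely Hopfian. -/
/-- A group is *cofinitely Hopfian* if every endomorphism whose image has
finite index is an automorphism (i.e. is bijective). -/
def CofinitelyHopfian (Γ : Type*) [Group Γ] : Prop :=
  ∀ φ : Γ →* Γ, φ.range.FiniteIndex → Function.Bijective φ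

/-!
Residual finiteness forces an endomorphism `ψ` of a finitely generated group with image of
finite index `d` to have finite kernel (Hirshon). If `ker ψ` lies in every image `ψⁿ(G)`, then
for any finite quotient `π : G → Q` two of the finitely many maps `π ∘ ψⁿ` agree, which kills
`π (ker ψ)`. Otherwise `ker ψ ⊄ ψⁿ(G)` for some `n`; then `ψ` restricts to an endomorphism of
`ψⁿ(G)` whose image has index `d / [ψⁿ(G) ⊔ ker ψ : ψⁿ(G)] < d`, and induction on `d` applies.

In a torsion-free group the finite kernel is trivial, so `φ(Γ) ≅ Γ`, and the volume gives
`V Γ = V (φ Γ) = [Γ : φ Γ] · V Γ`, whence `φ` is onto.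
-/

open Subgroup

theorem ResiduallyFinite.group_residuallyFinite {G : Type*} [Group G]
    (hG : ResiduallyFinite G) : Group.ResiduallyFinite G :=
  Group.residuallyFinite_iff_exists_finiteIndex.mpr fun g hg =>
    let ⟨N, _, hN, hgN⟩ := hG g hg
    ⟨N, hN, hgN⟩

instance Group.FG.finite_monoidHom {G Q : Type*} [Group G] [Group Q] [Group.FG G] [Finite Q] :
    Finite (G →* Q) := by
  obtain ⟨S, hS, hSfin⟩ := Group.fg_iff.mp ‹Group.FG G›
  have : Finite S := hSfin.to_subtype
  refine Finite.of_injective (fun f : G →* Q => fun s : S => f s) fun f g hfg => ?_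
  exact MonoidHom.eq_of_eqOn_dense hS fun s hs => congrFun hfg ⟨s, hs⟩

namespace Subgroup

variable {G : Type*} [Group G]

theorem finite_of_finite_subgroupOf {H K : Subgroup G} [H.FiniteIndex]
    [Finite (K.subgroupOf H)] : Finite K := by
  have : Finite (H.subgroupOf K) :=
    Finite.of_injective (fun x : H.subgroupOf K => (⟨⟨x.1, x.2⟩, x.1.2⟩ : K.subgroupOf H))
      fun x y hxy => Subtype.ext (Subtype.ext congr($hxy.1.1))
  exact Finite.of_subgroup_quotient (H.subgroupOf K)

theorem finiteIndex_map {G' : Type*} [Group G'] (H : Subgroup G) (f : G →* G') [H.FiniteIndex]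
    [f.range.FiniteIndex] : (H.map f).FiniteIndex := by
  rw [finiteIndex_iff, index_map]
  exact mul_ne_zero (finiteIndex_of_le le_sup_left).index_ne_zero FiniteIndex.index_ne_zero

end Subgroup

namespace MonoidHom

variable {G : Type*} [Group G]

def restrictEnd (ψ : G →* G) {H : Subgroup G} (hH : ∀ x ∈ H, ψ x ∈ H) : H →* H :=
  (ψ.domRestrict H).codRestrict H fun x => hH x x.2

variable (ψ : G →* G) {H : Subgroup G} (hH : ∀ x ∈ H, ψ x ∈ H)

theorem ker_restrictEnd : (ψ.restrictEnd hH).ker = ψ.ker.subgroupOf H := by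
  ext x
  rw [mem_ker, mem_subgroupOf, mem_ker, ← OneMemClass.coe_eq_one]
  rfl

theorem range_restrictEnd : (ψ.restrictEnd hH).range = (H.map ψ).subgroupOf H := by
  ext x
  constructor
  · rintro ⟨y, rfl⟩
    exact mem_map_of_mem ψ y.2
  · rintro ⟨y, hy, hyx⟩
    exact ⟨⟨y, hy⟩, Subtype.ext hyx⟩

theorem index_range_restrictEnd_mul_relIndex [H.FiniteIndex] :
    (ψ.restrictEnd hH).range.index * H.relIndex (H ⊔ ψ.ker) = ψ.range.index := by
  have hmap : H.map ψ ≤ H := map_le_iff_le_comap.mpr hH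
  have hJ : (H ⊔ ψ.ker).index ≠ 0 := (finiteIndex_of_le le_sup_left).index_ne_zero
  refine Nat.eq_of_mul_eq_mul_right (Nat.pos_of_ne_zero hJ) ?_
  rw [mul_assoc, relIndex_mul_index le_sup_left, range_restrictEnd, ← relIndex,
    relIndex_mul_index hmap, index_map, mul_comm]

end MonoidHom

namespace Monoid.End

variable {G : Type*} [Group G]

theorem range_pow_succ (ψ : Monoid.End G) (n : ℕ) :
    MonoidHom.range (ψ ^ (n + 1)) = (MonoidHom.range (ψ ^ n)).map ψ := by
  rw [pow_succ']
  exact MonoidHom.range_comp ψ (ψ ^ n)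

theorem finiteIndex_range_pow (ψ : Monoid.End G) [(MonoidHom.range ψ).FiniteIndex] (n : ℕ) :
    (MonoidHom.range (ψ ^ n)).FiniteIndex := by
  induction n with
  | zero =>
    exact (MonoidHom.range_eq_top.mpr fun x => ⟨x, rfl⟩ : MonoidHom.range (ψ ^ 0) = ⊤) ▸
      inferInstance
  | succ n ih =>
    rw [range_pow_succ]
    exact finiteIndex_map _ ψ

theorem mapsTo_range_pow (ψ : Monoid.End G) (n : ℕ) :
    ∀ x ∈ MonoidHom.range (ψ ^ n), ψ x ∈ MonoidHom.range (ψ ^ n) := by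
  rintro _ ⟨y, rfl⟩
  exact ⟨ψ y, (Function.iterate_succ_apply ψ n y).symm.trans (Function.iterate_succ_apply' ψ n y)⟩

theorem eq_one_of_mem_ker_of_forall_mem_range_pow [Group.FG G] [Group.ResiduallyFinite G]
    {ψ : Monoid.End G} {x : G} (hker : ψ x = 1) (hrange : ∀ n, x ∈ MonoidHom.range (ψ ^ n)) :
    x = 1 := by
  by_contra hx
  obtain ⟨N, hxN⟩ := Group.exists_finiteIndexNormalSubgroup_notMem x hx
  -- `G →* G ⧸ N` is finite, so two of the maps `π ∘ ψ ^ n` coincide.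
  obtain ⟨a, b, hab, heq⟩ := Finite.exists_ne_map_eq_of_infinite
    fun n : ℕ => (QuotientGroup.mk' N.toSubgroup).comp (ψ ^ n)
  wlog hlt : a < b generalizing a b
  · exact this b a hab.symm heq.symm (by omega)
  obtain ⟨y, rfl⟩ := hrange a
  obtain ⟨k, rfl⟩ := Nat.exists_eq_add_of_lt hlt
  refine hxN ((QuotientGroup.eq_one_iff _).mp ?_)
  have h : (ψ^[a] y : G ⧸ N.toSubgroup) = ψ^[a + k + 1] y := DFunLike.congr_fun heq y
  change ψ (ψ^[a] y) = 1 at hker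
  change (ψ^[a] y : G ⧸ N.toSubgroup) = 1
  rw [h, show a + k + 1 = k + (a + 1) by omega, Function.iterate_add_apply,
    Function.iterate_succ_apply', hker, iterate_map_one, QuotientGroup.mk_one]

theorem finite_ker_of_finiteIndex_range [Group.FG G] [Group.ResiduallyFinite G]
    (ψ : Monoid.End G) [(MonoidHom.range ψ).FiniteIndex] : Finite (MonoidHom.ker ψ) := by
  induction hd : (MonoidHom.range ψ).index using Nat.strong_induction_on generalizing G with
  | _ d ih =>
  by_cases hker : ∀ n, MonoidHom.ker ψ ≤ MonoidHom.range (ψ ^ n)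
  · have : MonoidHom.ker ψ = ⊥ := (eq_bot_iff_forall _).mpr fun x hx =>
      eq_one_of_mem_ker_of_forall_mem_range_pow hx fun n => hker n hx
    rw [this]
    infer_instance
  obtain ⟨n, hn⟩ := not_forall.mp hker
  set H := MonoidHom.range (ψ ^ n)
  have : H.FiniteIndex := finiteIndex_range_pow ψ n
  set ψH : Monoid.End H := MonoidHom.restrictEnd ψ (mapsTo_range_pow ψ n)
  have hprod : (MonoidHom.range ψH).index * H.relIndex (H ⊔ MonoidHom.ker ψ) = d :=
    hd ▸ MonoidHom.index_range_restrictEnd_mul_relIndex ψ _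
  have he : 1 < H.relIndex (H ⊔ MonoidHom.ker ψ) :=
    Nat.one_lt_iff_ne_zero_and_ne_one.mpr ⟨FiniteIndex.index_ne_zero,
      fun h => hn (le_sup_right.trans (relIndex_eq_one.mp h))⟩
  have : (MonoidHom.range ψH).FiniteIndex :=
    ⟨left_ne_zero_of_mul (hprod ▸ hd ▸ FiniteIndex.index_ne_zero)⟩
  have hlt : (MonoidHom.range ψH).index < d :=
    hprod ▸ lt_mul_of_one_lt_right (Nat.pos_of_ne_zero FiniteIndex.index_ne_zero) he
  have : Finite ((MonoidHom.ker ψ).subgroupOf H) :=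
    MonoidHom.ker_restrictEnd ψ _ ▸ ih _ hlt ψH rfl
  exact finite_of_finite_subgroupOf (H := H)

end Monoid.End

/-- A finitely generated, residually finite, torsion-free group admitting a
non-zero (positive), isomorphism-invariant, multiplicative volume-type
invariant on its finite-index subgroups is cofinitely Hopfian. -/
theorem volumeTypeInvariant_implies_cofinitelyHopfian (Γ : Type*) [Group Γ]
    [Group.FG Γ] (hrf : ResiduallyFinite Γ) (htf : ∀ g : Γ, g ≠ 1 → ¬IsOfFinOrder g)
    (V : Subgroup Γ → ℝ)
    (hpos : ∀ H : Subgroup Γ, H.FiniteIndex → 0 < V H)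
    (hmul : ∀ H : Subgroup Γ, H.FiniteIndex → V H = (H.index : ℝ) * V ⊤)
    (hiso : ∀ H K : Subgroup Γ, H.FiniteIndex → K.FiniteIndex →
      Nonempty (H ≃* K) → V H = V K) :
    CofinitelyHopfian Γ := by
  intro φ hφ
  have := hrf.group_residuallyFinite
  have : Finite φ.ker := Monoid.End.finite_ker_of_finiteIndex_range φ
  have hinj : Function.Injective φ := by
    refine φ.ker_eq_bot_iff.mp ((eq_bot_iff_forall _).mpr fun x hx => by_contra fun hx1 => ?_)
    exact htf x hx1 (Submonoid.isOfFinOrder_coe.mpr (isOfFinOrder_of_finite (⟨x, hx⟩ : φ.ker)))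
  have hV : V ⊤ = V φ.range :=
    hiso ⊤ φ.range inferInstance hφ ⟨topEquiv.trans (MonoidHom.ofInjective hinj)⟩
  have hidx : (φ.range.index : ℝ) = 1 :=
    (mul_eq_right₀ (hpos ⊤ inferInstance).ne').mp (hV.trans (hmul φ.range hφ)).symm
  exact ⟨hinj, φ.range_eq_top.mp (index_eq_one.mp (by exact_mod_cast hidx))⟩
end

section
/- A finitely generated, residually finite, torsion-free group that is finitely co-Hopfian is cofinitely Hopfian. -/
/-- A group is *finitely co-Hopfian* if every injective endomorphism with
image of finite index is an automorphism. -/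
def FinitelyCoHopfian (Γ : Type*) [Group Γ] : Prop :=
  ∀ φ : Γ →* Γ, Function.Injective φ → φ.range.FiniteIndex → Function.Bijective φ

open Function Set

theorem Function.exists_range_iterate_subset_periodicPts {α : Type*} [Finite α] (f : α → α) :
    ∃ m, range f^[m] ⊆ periodicPts f := by
  obtain ⟨i, j, hij, hf⟩ := Finite.exists_ne_map_eq_of_infinite fun n : ℕ ↦ f^[n]
  wlog hlt : i < j generalizing i j
  · exact this j i hij.symm hf.symm (hij.lt_or_gt.resolve_left hlt)
  refine ⟨i, ?_⟩
  rintro _ ⟨x, rfl⟩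
  refine mk_mem_periodicPts (Nat.sub_pos_of_lt hlt) ?_
  rw [IsPeriodicPt, IsFixedPt, ← iterate_add_apply, Nat.sub_add_cancel hlt.le, hf]

theorem Group.FG.finite_monoidHom_s11 (G Q : Type*) [Group G] [Group Q] [Group.FG G] [Finite Q] :
    Finite (G →* Q) := by
  obtain ⟨S, hS⟩ := ‹Group.FG G›
  refine Finite.of_injective (fun f (s : S) ↦ f s) fun f g hfg ↦ ?_
  exact MonoidHom.eq_of_eqOn_dense hS fun x hx ↦ congrFun hfg ⟨x, hx⟩

namespace Subgroup

variable {G : Type*} [Group G]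

theorem exists_forall_ge_eq_of_monotone {V : ℕ → Subgroup G} (hV : Monotone V)
    (hfin : ∀ n, (V n).FiniteIndex) : ∃ n₀, ∀ m, n₀ ≤ m → V m = V n₀ := by
  refine ⟨argmin fun n ↦ (V n).index, fun m hm ↦ ?_⟩
  have := hfin (argmin fun n ↦ (V n).index)
  refine ((hV hm).eq_or_lt.resolve_right fun hlt ↦ ?_).symm
  exact (index_strictAnti hlt).not_ge (argmin_le (fun n ↦ (V n).index) m)

theorem exists_fullyInvariant_finiteIndex_le [Group.FG G] (N : Subgroup G) [N.Normal]
    [N.FiniteIndex] : ∃ I : Subgroup G, I.Normal ∧ I.FiniteIndex ∧ I ≤ N ∧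
      ∀ φ : G →* G, I ≤ I.comap φ := by
  have := Group.FG.finite_monoidHom_s11 G (G ⧸ N)
  refine ⟨⨅ ψ : G →* G ⧸ N, ψ.ker, normal_iInf_normal fun ψ : G →* G ⧸ N ↦ ψ.normal_ker,
    finiteIndex_iInf fun ψ ↦ inferInstance, ?_, fun φ ↦ ?_⟩
  · simpa using iInf_le (fun ψ : G →* G ⧸ N ↦ ψ.ker) (QuotientGroup.mk' N)
  · rw [comap_iInf]
    exact le_iInf fun ψ ↦ (ψ.comap_ker φ).symm ▸ iInf_le (fun χ : G →* G ⧸ N ↦ χ.ker) (ψ.comp φ)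

theorem eq_bot_of_inf_eq_bot_of_isTorsionFree (htf : Monoid.IsTorsionFree G) {K H : Subgroup G}
    [H.FiniteIndex] (h : K ⊓ H = ⊥) : K = ⊥ := by
  refine (eq_bot_iff_forall K).mpr fun k hk ↦ by_contra fun hk1 ↦ ?_
  obtain ⟨e, he, -, hkeH⟩ := H.exists_pow_mem_of_index_ne_zero FiniteIndex.index_ne_zero k
  have hke : k ^ e = 1 := by
    rw [← mem_bot, ← h]
    exact ⟨K.pow_mem hk e, hkeH⟩
  exact htf k hk1 (isOfFinOrder_iff_pow_eq_one.mpr ⟨e, he, hke⟩)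

end Subgroup

namespace MonoidHom

variable {G : Type*} [Group G] (φ : G →* G)

def iterate : ℕ → G →* G
  | 0 => .id G
  | n + 1 => φ.comp (iterate n)

@[simp]
theorem coe_iterate (n : ℕ) : ⇑(φ.iterate n) = (⇑φ)^[n] := by
  induction n with
  | zero => rfl
  | succ n ih => rw [iterate, coe_comp, ih, iterate_succ']

theorem range_iterate_succ (n : ℕ) : (φ.iterate (n + 1)).range = (φ.iterate n).range.map φ := by
  rw [iterate, range_comp]

theorem range_iterate_add_le (m k : ℕ) : (φ.iterate (m + k)).range ≤ (φ.iterate m).range := by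
  rintro _ ⟨x, rfl⟩
  exact ⟨(φ.iterate k) x, by simp [iterate_add_apply]⟩

theorem ker_iterate_le_succ (n : ℕ) : (φ.iterate n).ker ≤ (φ.iterate (n + 1)).ker := by
  intro x hx
  rw [mem_ker, coe_iterate] at hx ⊢
  rw [iterate_succ_apply', hx, map_one]

instance finiteIndex_range_iterate [φ.range.FiniteIndex] (n : ℕ) :
    (φ.iterate n).range.FiniteIndex := by
  induction n with
  | zero => rw [iterate, range_eq_top_of_surjective _ surjective_id]; infer_instance
  | succ n ih =>
    refine ⟨?_⟩
    rw [range_iterate_succ, Subgroup.index_map]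
    exact mul_ne_zero (Subgroup.finiteIndex_of_le le_sup_left).index_ne_zero
      Subgroup.FiniteIndex.index_ne_zero

theorem ker_inf_range_iterate_le_succ {n : ℕ}
    (h : (φ.iterate (n + 1)).ker ≤ (φ.iterate n).ker ⊔ φ.range) :
    φ.ker ⊓ (φ.iterate n).range ≤ (φ.iterate (n + 1)).range := by
  rintro _ ⟨hy, z, rfl⟩
  have hz : z ∈ (φ.iterate (n + 1)).ker := by
    rwa [mem_ker, coe_iterate, iterate_succ_apply', ← coe_iterate]
  obtain ⟨a, ha, _, ⟨b, rfl⟩, rfl⟩ := Subgroup.mem_sup_of_normal_left.mp (h hz)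
  refine ⟨b, ?_⟩
  rw [mem_ker] at ha
  rw [map_mul, ha, one_mul, coe_iterate, coe_iterate, iterate_succ_apply]

variable [Group.FG G] [Group.ResiduallyFinite G]

theorem eq_one_of_mem_ker_of_forall_mem_range_iterate {y : G} (hy : y ∈ φ.ker)
    (hrange : ∀ n, y ∈ (φ.iterate n).range) : y = 1 := by
  by_contra hne
  obtain ⟨N, hyN⟩ := Group.exists_finiteIndexNormalSubgroup_notMem y hne
  obtain ⟨I, _, _, hIN, hI⟩ :=
    Subgroup.exists_fullyInvariant_finiteIndex_le N.toSubgroup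
  let f := QuotientGroup.map I I φ (hI φ)
  have hsemi : Semiconj (QuotientGroup.mk' I) φ f := fun _ ↦ rfl
  obtain ⟨m, hm⟩ := exists_range_iterate_subset_periodicPts f
  have hper (x : G) : (QuotientGroup.mk' I (φ.iterate m x)) ∈ periodicPts f :=
    hm ⟨QuotientGroup.mk' I x, by rw [coe_iterate, hsemi.iterate_right m x]⟩
  obtain ⟨x, rfl⟩ := hrange m
  have hf : f (QuotientGroup.mk' I (φ.iterate m x)) = f (QuotientGroup.mk' I (φ.iterate m 1)) := by
    rw [← hsemi, mem_ker.mp hy, map_one, map_one, map_one, map_one]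
  have := (bijOn_periodicPts f).injOn (hper x) (hper 1) hf
  rw [map_one, map_one, QuotientGroup.mk'_apply, QuotientGroup.eq_one_iff] at this
  exact hyN (hIN this)

theorem exists_ker_inf_range_iterate_eq_bot [φ.range.FiniteIndex] :
    ∃ n, φ.ker ⊓ (φ.iterate n).range = ⊥ := by
  let V n := (φ.iterate n).ker ⊔ φ.range
  obtain ⟨n₀, hn₀⟩ := Subgroup.exists_forall_ge_eq_of_monotone (V := V)
    (monotone_nat_of_le_succ fun n ↦ sup_le_sup_right (φ.ker_iterate_le_succ n) _)
    (fun _ ↦ Subgroup.finiteIndex_of_le le_sup_right)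
  have hstep (j : ℕ) : φ.ker ⊓ (φ.iterate n₀).range ≤ (φ.iterate (n₀ + j)).range := by
    induction j with
    | zero => exact inf_le_right
    | succ j ih =>
      refine (le_inf inf_le_left ih).trans (φ.ker_inf_range_iterate_le_succ ?_)
      calc (φ.iterate (n₀ + j + 1)).ker ≤ V (n₀ + j + 1) := le_sup_left
        _ = V (n₀ + j) := (hn₀ _ (by omega)).trans (hn₀ _ (by omega)).symm
  refine ⟨n₀, (Subgroup.eq_bot_iff_forall _).mpr fun y hy ↦ ?_⟩
  refine φ.eq_one_of_mem_ker_of_forall_mem_range_iterate hy.1 fun m ↦ ?_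
  exact φ.range_iterate_add_le m n₀ (add_comm n₀ m ▸ hstep m hy)

end MonoidHom

/-- A finitely generated, residually finite, torsion-free group that is
finitely co-Hopfian is cofinitely Hopfian. -/
theorem finitelyCoHopfian_implies_cofinitelyHopfian (Γ : Type*) [Group Γ]
    [Group.FG Γ] (hrf : ResiduallyFinite Γ) (htf : Monoid.IsTorsionFree Γ)
    (h : FinitelyCoHopfian Γ) : CofinitelyHopfian Γ := by
  intro φ hφ
  have : Group.ResiduallyFinite Γ := Group.residuallyFinite_iff_exists_finiteIndex.mpr
    fun g hg ↦ let ⟨N, _, hN, hgN⟩ := hrf g hg; ⟨N, hN, hgN⟩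
  obtain ⟨n, hn⟩ := φ.exists_ker_inf_range_iterate_eq_bot
  exact h φ ((φ.ker_eq_bot_iff).mp (Subgroup.eq_bot_of_inf_eq_bot_of_isTorsionFree htf hn)) hφ
end

section
/- Let Γ = F ⋊_θ ℤ where F is a finitely generated free group of rank r ≥ 2. If the outer automorphism class [θ] has finite order d in Out(F), then Γ is not finitely hyper-Hopfian: for any s ≡ 1 mod d with s > 1, Γ has a proper normal subgroup N of index s with Γ/N cyclic and N ≅ Γ. -/
/-!
If `θ ^ s = conj c * θ`, then `γ = c⁻¹ t ^ s` (with `t` the stable letter) acts on `F` by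
conjugation exactly as `t` does, so `F ⋊_θ ℤ` maps to itself by `f ↦ f`, `t ↦ γ`. This map is
injective and its image is the preimage of `sℤ` under `F ⋊_θ ℤ → ℤ`: a normal subgroup of index
`s` with cyclic quotient. When `θ ^ d = conj g` and `s = d q + 1`, `θ ^ s = conj (g ^ q) * θ`.
-/

open SemidirectProduct

namespace SemidirectProduct

variable {N H : Type*} [Group N] [Group H] {θ : MulAut N}

theorem zpow_mul_apply_mul_zpow_inv {f : N →* H} {h : H}
    (hf : ∀ n, h * f n * h⁻¹ = f (θ n)) (k : ℤ) (n : N) :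
    h ^ k * f n * (h ^ k)⁻¹ = f ((θ ^ k) n) := by
  induction k using Int.induction_on generalizing n with
  | zero => simp
  | succ k ih =>
    rw [zpow_add_one, zpow_add_one, MulAut.mul_apply, ← ih, ← hf]
    group
  | pred k ih =>
    have hf_inv : h⁻¹ * f n * h = f (θ⁻¹ n) := by
      have := hf (θ⁻¹ n)
      rw [MulAut.apply_inv_self] at this
      rw [← this]
      group
    rw [zpow_sub_one, zpow_sub_one, MulAut.mul_apply, ← ih, ← hf_inv]
    group

def liftZPowers (f : N →* H) (h : H) (hf : ∀ n, h * f n * h⁻¹ = f (θ n)) :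
    N ⋊[zpowersHom (MulAut N) θ] Multiplicative ℤ →* H :=
  lift f (zpowersHom H h) fun m ↦ MonoidHom.ext fun n ↦
    (zpow_mul_apply_mul_zpow_inv hf m.toAdd n).symm

@[simp]
theorem liftZPowers_inl (f : N →* H) (h : H) (hf : ∀ n, h * f n * h⁻¹ = f (θ n)) (n : N) :
    liftZPowers f h hf (inl n) = f n :=
  lift_inl _ _ _ n

@[simp]
theorem liftZPowers_inr (f : N →* H) (h : H) (hf : ∀ n, h * f n * h⁻¹ = f (θ n))
    (m : Multiplicative ℤ) : liftZPowers f h hf (inr m) = h ^ m.toAdd :=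
  lift_inr _ _ _ m

section SelfEmbedding

variable {γ : N ⋊[zpowersHom (MulAut N) θ] Multiplicative ℤ}
  (hγ : ∀ n, γ * inl n * γ⁻¹ = inl (θ n))

theorem rightHom_liftZPowers_inl (x : N ⋊[zpowersHom (MulAut N) θ] Multiplicative ℤ) :
    rightHom (liftZPowers inl γ hγ x) = rightHom γ ^ x.right.toAdd := by
  conv_lhs => rw [← inl_left_mul_inr_right x]
  rw [map_mul, liftZPowers_inl, liftZPowers_inr, map_mul, rightHom_inl, one_mul, map_zpow]

theorem liftZPowers_inl_injective (hγ₁ : rightHom γ ≠ 1) :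
    Function.Injective (liftZPowers inl γ hγ) := by
  refine (injective_iff_map_eq_one _).2 fun x hx ↦ ?_
  have hright : x.right = 1 := by
    have := rightHom_liftZPowers_inl hγ x
    rw [hx, map_one, eq_comm] at this
    by_contra hne
    exact hγ₁ ((IsMulTorsionFree.zpow_eq_one_iff_left (by simpa using hne)).1 this)
  rw [← inl_left_mul_inr_right x, hright, map_one, mul_one] at hx ⊢
  rwa [liftZPowers_inl] at hx

theorem range_liftZPowers_inl :
    (liftZPowers inl γ hγ).range = (Subgroup.zpowers (rightHom γ)).comap rightHom := by
  ext x
  constructor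
  · rintro ⟨y, rfl⟩
    exact ⟨_, (rightHom_liftZPowers_inl hγ y).symm⟩
  · rintro ⟨k, hk : rightHom γ ^ k = rightHom x⟩
    obtain ⟨n, hn⟩ : x * (γ ^ k)⁻¹ ∈ (inl : N →* _).range := by
      rw [range_inl_eq_ker_rightHom, MonoidHom.mem_ker, map_mul, map_inv, map_zpow, ← hk,
        mul_inv_cancel]
    refine ⟨inl n * inr (Multiplicative.ofAdd k), ?_⟩
    rw [map_mul, liftZPowers_inl, liftZPowers_inr, hn, toAdd_ofAdd, inv_mul_cancel_right]

end SelfEmbedding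

theorem inl_inv_mul_inr_conj_inl {c : N} {s : ℤ} (hθ : θ ^ s = MulAut.conj c * θ) (n : N) :
    (inl c⁻¹ * inr (Multiplicative.ofAdd s) : N ⋊[zpowersHom (MulAut N) θ] Multiplicative ℤ) *
        inl n * (inl c⁻¹ * inr (Multiplicative.ofAdd s))⁻¹ = inl (θ n) := by
  have hinr : (inr (Multiplicative.ofAdd s) : N ⋊[zpowersHom (MulAut N) θ] _) * inl n *
      (inr (Multiplicative.ofAdd s))⁻¹ = inl (c * θ n * c⁻¹) := by
    rw [← map_inv, ← inl_aut, zpowersHom_apply, toAdd_ofAdd, hθ, MulAut.mul_apply,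
      MulAut.conj_apply]
  calc _ = inl c⁻¹ * ((inr (Multiplicative.ofAdd s) : N ⋊[zpowersHom (MulAut N) θ] _) *
        inl n * (inr (Multiplicative.ofAdd s))⁻¹) * inl c := by
        simp only [mul_inv_rev, map_inv, inv_inv, mul_assoc]
    _ = inl (θ n) := by rw [hinr, ← map_mul, ← map_mul]; group

theorem rightHom_inl_mul_inr {G : Type*} [Group G] {φ : G →* MulAut N} (n : N) (g : G) :
    rightHom (inl n * inr g : N ⋊[φ] G) = g := by
  rw [map_mul, rightHom_inl, rightHom_inr, one_mul]

theorem exists_zpow_mul_mem_comap_rightHom {φ : Multiplicative ℤ →* MulAut N}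
    (K : Subgroup (Multiplicative ℤ)) :
    ∃ g : N ⋊[φ] Multiplicative ℤ, ∀ x, ∃ k : ℤ, g ^ k * x ∈ K.comap rightHom := by
  refine ⟨inr (Multiplicative.ofAdd 1), fun x ↦ ⟨-x.right.toAdd, ?_⟩⟩
  rw [Subgroup.mem_comap, map_mul, map_zpow, rightHom_inr, ← ofAdd_zsmul, smul_eq_mul, mul_one,
    ofAdd_neg, ofAdd_toAdd, rightHom_eq_right, inv_mul_cancel]
  exact K.one_mem

end SemidirectProduct

theorem Multiplicative.index_zpowers_ofAdd (s : ℤ) :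
    (Subgroup.zpowers (Multiplicative.ofAdd s)).index = s.natAbs :=
  Int.index_zmultiples s

theorem freeByCyclic_not_finitelyHyperHopfian_of_finiteOrder_general (r : ℕ)
    (θ : MulAut (FreeGroup (Fin r))) (d : ℕ)
    (hinner : ∃ g : FreeGroup (Fin r), θ ^ d = MulAut.conj g) :
    ∀ s : ℕ, 1 < s → s % d = 1 →
      ∃ N : Subgroup
          (SemidirectProduct (FreeGroup (Fin r)) (Multiplicative ℤ)
            (zpowersHom (MulAut (FreeGroup (Fin r))) θ)),
        N.Normal ∧ N ≠ ⊤ ∧ N.index = s ∧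
        Nonempty (N ≃*
          SemidirectProduct (FreeGroup (Fin r)) (Multiplicative ℤ)
            (zpowersHom (MulAut (FreeGroup (Fin r))) θ)) ∧
        -- the quotient `Γ/N` is cyclic, generated by the image of some `g`
        (∃ g, ∀ x, ∃ k : ℤ, g ^ k * x ∈ N) := by
  intro s hs hmod
  obtain ⟨g, hg⟩ := hinner
  have hθs : θ ^ (s : ℤ) = MulAut.conj (g ^ (s / d)) * θ := by
    conv_lhs => rw [zpow_natCast, ← Nat.div_add_mod s d, hmod]
    rw [pow_succ, pow_mul, hg, map_pow]
  have hγ := inl_inv_mul_inr_conj_inl hθs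
  have hrange := range_liftZPowers_inl hγ
  have hindex : (liftZPowers inl _ hγ).range.index = s := by
    rw [hrange, Subgroup.index_comap_of_surjective _ rightHom_surjective, rightHom_inl_mul_inr,
      Multiplicative.index_zpowers_ofAdd, Int.natAbs_natCast]
  refine ⟨(liftZPowers inl _ hγ).range, ?_, ?_, hindex, ?_, ?_⟩
  · rw [hrange]; infer_instance
  · rw [Ne, ← Subgroup.index_eq_one, hindex]; omega
  · have hinj := liftZPowers_inl_injective hγ <| by
      rw [rightHom_inl_mul_inr, Ne, ofAdd_eq_one]; omega
    exact ⟨(MonoidHom.ofInjective hinj).symm⟩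
  · exact hrange ▸ exists_zpow_mul_mem_comap_rightHom _

/-- Let `Γ = F ⋊_θ ℤ` where `F` is a free group of rank `r ≥ 2` and the class
`[θ]` of `θ` in `Out(F)` has finite order `d` (i.e. `θ^d` is an inner
automorphism).  Then for any `s > 1` with `s ≡ 1 (mod d)`, `Γ` has a proper
normal subgroup `N` of index `s` with cyclic quotient `Γ/N` and `N ≅ Γ`;
in particular `Γ` is not finitely hyper-Hopfian. -/
theorem freeByCyclic_not_finitelyHyperHopfian_of_finiteOrder (r : ℕ) (hr : 2 ≤ r)
    (θ : MulAut (FreeGroup (Fin r))) (d : ℕ) (hd : 0 < d)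
    (hinner : ∃ g : FreeGroup (Fin r), θ ^ d = MulAut.conj g) :
    ∀ s : ℕ, 1 < s → s % d = 1 →
      ∃ N : Subgroup
          (SemidirectProduct (FreeGroup (Fin r)) (Multiplicative ℤ)
            (zpowersHom (MulAut (FreeGroup (Fin r))) θ)),
        N.Normal ∧ N ≠ ⊤ ∧ N.index = s ∧
        Nonempty (N ≃*
          SemidirectProduct (FreeGroup (Fin r)) (Multiplicative ℤ)
            (zpowersHom (MulAut (FreeGroup (Fin r))) θ)) ∧
        -- the quotient `Γ/N` is cyclic, generated by the image of some `g`
        (∃ g, ∀ x, ∃ k : ℤ, g ^ k * x ∈ N) :=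
  freeByCyclic_not_finitelyHyperHopfian_of_finiteOrder_general r θ d hinner
end

section
/- Let Γ = F_r ⋊_θ ℤ. The centre of Γ is trivial if and only if the image [θ] of θ in Out(F_r) has infinite order (assuming r ≥ 2). -/
/-!
If `(a, t^m)` is central in `F ⋊_θ ℤ`, commuting with `F` forces `θ^m = conj a⁻¹`, so `m = 0`
when no nonzero power of `θ` is inner; then `a` is central in `F`, hence trivial since a free group
of rank at least two is centreless. Conversely, if `θ^d = conj g`, then `θ` commutes with `conj g`,
so `conj (θ g) = conj g` and, `F` being centreless, `θ g = g`; this makes `(g⁻¹, t^d)` central.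
-/

namespace FreeGroup

section

variable {α : Type*} [DecidableEq α]

theorem toWord_mul_of_isReduced {x y : FreeGroup α} (h : IsReduced (x.toWord ++ y.toWord)) :
    (x * y).toWord = x.toWord ++ y.toWord := by
  rw [toWord_mul, h.reduce_eq]

theorem toWord_mk_singleton (l : α × Bool) : (mk [l]).toWord = [l] := by
  rw [toWord_mk, reduce_singleton]

end

theorem center_eq_bot {α : Type*} [Nontrivial α] :
    Subgroup.center (FreeGroup α) = ⊥ := by
  classical
  refine (Subgroup.eq_bot_iff_forall _).mpr fun a ha => ?_
  by_contra ha1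
  have hne : a.toWord ≠ [] := mt toWord_eq_nil_iff.mp ha1
  obtain ⟨c, T, hcT⟩ := List.exists_cons_of_ne_nil hne
  obtain ⟨x, hx⟩ := exists_ne c.1
  -- `l` cancels neither with the last letter nor with the first letter `c` of `a`
  set l : α × Bool := (x, (a.toWord.getLast hne).2)
  have hright : (a * mk [l]).toWord = a.toWord ++ [l] := by
    rw [toWord_mul_of_isReduced] <;> rw [toWord_mk_singleton]
    refine List.isChain_append.mpr ⟨isReduced_toWord, IsReduced.singleton, ?_⟩
    simp [List.getLast?_eq_some_getLast hne, l]
  have hleft : (mk [l] * a).toWord = l :: a.toWord := by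
    rw [toWord_mul_of_isReduced] <;> rw [toWord_mk_singleton]
    · rfl
    refine List.isChain_append.mpr ⟨IsReduced.singleton, isReduced_toWord, ?_⟩
    simp [hcT, l, hx]
  have hcomm : l :: a.toWord = a.toWord ++ [l] := by
    rw [← hleft, ← hright, Subgroup.mem_center_iff.mp ha]
  rw [hcT, List.cons_append, List.cons_eq_cons] at hcomm
  exact hx (congrArg Prod.fst hcomm.1)

end FreeGroup

namespace MulAut

variable {G : Type*} [Group G]

theorem ker_conj : (MulAut.conj : G →* MulAut G).ker = Subgroup.center G := by
  ext g
  simp only [MonoidHom.mem_ker, MulEquiv.ext_iff, conj_apply, one_apply, Subgroup.mem_center_iff,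
    mul_inv_eq_iff_eq_mul]
  exact forall_congr' fun _ => eq_comm

theorem conj_apply_eq_mul_conj_mul_inv (θ : MulAut G) (g : G) :
    conj (θ g) = θ * conj g * θ⁻¹ := by
  ext x
  simp

theorem apply_eq_self_of_commute_conj (hG : Subgroup.center G = ⊥) {θ : MulAut G} {g : G}
    (h : Commute θ (conj g)) : θ g = g := by
  have hinj : Function.Injective (MulAut.conj : G → MulAut G) := by
    rw [← MonoidHom.ker_eq_bot_iff, ker_conj, hG]
  exact hinj (by rw [conj_apply_eq_mul_conj_mul_inv, h.eq, mul_inv_cancel_right])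

end MulAut

theorem Subgroup.pow_natAbs_mem_iff {G : Type*} [Group G] {H : Subgroup G} {x : G} {n : ℤ} :
    x ^ n.natAbs ∈ H ↔ x ^ n ∈ H := by
  cases n <;> simp [zpow_negSucc]

namespace SemidirectProduct

section

variable {N G : Type*} [Group N] [Group G] {φ : G →* MulAut N}

theorem mem_center_iff {x : N ⋊[φ] G} :
    x ∈ Subgroup.center (N ⋊[φ] G) ↔
      x.right ∈ Subgroup.center G ∧ φ x.right = MulAut.conj x.left⁻¹ ∧
        ∀ g, φ g x.left = x.left := by
  simp only [Subgroup.mem_center_iff]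
  constructor
  · intro hx
    refine ⟨fun g => congrArg right (hx (inr g)), ?_, fun g => ?_⟩
    · ext n
      have := congrArg left (hx (inl n))
      simp only [mul_left, left_inl, right_inl, map_one, MulAut.one_apply] at this
      rw [MulAut.conj_apply, inv_inv, mul_assoc, this, inv_mul_cancel_left]
    · simpa using congrArg left (hx (inr g))
  · rintro ⟨hright, hconj, hfix⟩ y
    ext
    · simp only [mul_left, hconj, hfix, MulAut.conj_apply, inv_inv]
      group
    · exact hright y.right

end

open Multiplicative

variable {N : Type*} [Group N]

theorem mk_mem_center_of_zpow_eq_conj (hN : Subgroup.center N = ⊥) {θ : MulAut N} {n : ℤ}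
    {g : N} (h : θ ^ n = MulAut.conj g) :
    (⟨g⁻¹, ofAdd n⟩ : N ⋊[zpowersHom (MulAut N) θ] Multiplicative ℤ) ∈
      Subgroup.center (N ⋊[zpowersHom (MulAut N) θ] Multiplicative ℤ) := by
  have hfix : θ ∈ MulAction.stabilizer (MulAut N) g :=
    MulAut.apply_eq_self_of_commute_conj hN (h ▸ Commute.self_zpow θ n)
  refine mem_center_iff.mpr ⟨Subgroup.mem_center_iff.mpr fun _ => mul_comm _ _, ?_, fun k => ?_⟩
  · simpa [zpowersHom_apply] using h
  · simpa [zpowersHom_apply] using (MulAction.stabilizer (MulAut N) g).zpow_mem hfix k.toAdd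

theorem center_zpowersHom_eq_bot_iff (hN : Subgroup.center N = ⊥) (θ : MulAut N) :
    Subgroup.center (N ⋊[zpowersHom (MulAut N) θ] Multiplicative ℤ) = ⊥ ↔
      ∀ d : ℕ, 0 < d → ¬ ∃ g : N, θ ^ d = MulAut.conj g := by
  simp only [eq_comm (a := θ ^ _), ← MonoidHom.mem_range]
  constructor
  · rintro hZ d hd ⟨g, hg⟩
    have hmem := mk_mem_center_of_zpow_eq_conj hN (n := d) (by rw [zpow_natCast, hg])
    rw [hZ, Subgroup.mem_bot] at hmem
    have : (d : ℤ) = 0 := congrArg (toAdd ∘ right) hmem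
    omega
  · intro h
    refine (Subgroup.eq_bot_iff_forall _).mpr fun x hx => ?_
    obtain ⟨-, hconj, -⟩ := mem_center_iff.mp hx
    rw [zpowersHom_apply] at hconj
    have hright : x.right = 1 := by
      by_contra hne
      refine h _ (Int.natAbs_pos.mpr (toAdd_eq_zero.not.mpr hne)) ?_
      exact Subgroup.pow_natAbs_mem_iff.mpr ⟨x.left⁻¹, hconj.symm⟩
    have hleft : x.left⁻¹ ∈ Subgroup.center N := by
      rw [← MulAut.ker_conj, MonoidHom.mem_ker, ← hconj, hright, toAdd_one, zpow_zero]
    rw [hN, Subgroup.mem_bot, inv_eq_one] at hleft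
    exact SemidirectProduct.ext hleft hright

end SemidirectProduct

/-- Let `Γ = F_r ⋊_θ ℤ` with `r ≥ 2`.  The centre of `Γ` is trivial if and
only if the image `[θ]` of `θ` in `Out(F_r)` has infinite order, i.e. no
positive power of `θ` is an inner automorphism. -/
theorem freeByCyclic_center_trivial_iff (r : ℕ) (hr : 2 ≤ r)
    (θ : MulAut (FreeGroup (Fin r))) :
    Subgroup.center
        (SemidirectProduct (FreeGroup (Fin r)) (Multiplicative ℤ)
          (zpowersHom (MulAut (FreeGroup (Fin r))) θ)) = ⊥ ↔
      ∀ d : ℕ, 0 < d → ¬ ∃ g : FreeGroup (Fin r), θ ^ d = MulAut.conj g :=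
  have : Nontrivial (Fin r) := Fin.nontrivial_iff_two_le.mpr hr
  SemidirectProduct.center_zpowersHom_eq_bot_iff FreeGroup.center_eq_bot θ
end

section
/- In the torus knot group Γ_{m,n} = ⟨a, b ∣ aⁿ = bᵐ⟩ with m, n ≥ 2 coprime, let z = aⁿ. If r is an integer with r ≡ 1 mod n and r ≡ 1 mod m, and p, q are defined by np = mq = r − 1, then the assignment a ↦ a z^p, b ↦ b z^q defines an injective endomorphism φ of Γ_{m,n} whose image has finite index, and φ is surjective if and only if r = ±1. -/
/-!
The endomorphism `φ` is congruent to the identity modulo the central subgroup `⟨z⟩` and acts on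
it by `z ↦ z ^ r`, while `z` has infinite order (the degree map `a ↦ m`, `b ↦ n` to `ℤ` sends it
to `mn`). So the kernel of `φ` lies in `⟨z⟩` and is trivial because `r ≠ 0`; the image of `φ` is
normal, with cyclic quotient generated by the class of `z`, which is killed by the `r`-th power;
and `φ` is onto exactly when `z` is in the image, i.e. when `r` is a unit.
-/

abbrev torusKnotRels (m n : ℕ) : Set (FreeGroup Bool) :=
  {FreeGroup.of true ^ n * (FreeGroup.of false ^ m)⁻¹}

abbrev TorusKnotGroup (m n : ℕ) := PresentedGroup (torusKnotRels m n)

open Subgroup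

theorem mul_zpow_pow_of_mem_center {G : Type*} [Group G] {z : G} (hz : z ∈ center G) (x : G)
    (k : ℤ) (n : ℕ) : (x * z ^ k) ^ n = x ^ n * z ^ (n * k) := by
  have hcomm : Commute x (z ^ k) := mem_center_iff.mp (zpow_mem hz k) x
  rw [hcomm.mul_pow, ← zpow_natCast (z ^ k), ← zpow_mul, mul_comm]

theorem Subgroup.zpowers_normal_of_mem_center {G : Type*} [Group G] {z : G} (hz : z ∈ center G) :
    (zpowers z).Normal where
  conj_mem x hx g := by
    rw [mem_center_iff.mp (zpowers_le.mpr hz hx) g, mul_inv_cancel_right]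
    exact hx

namespace MonoidHom

variable {G : Type*} [Group G] {z : G} {r : ℤ} {f : G →* G}

theorem exists_eq_map_mul_zpow (hf : ∀ g, g⁻¹ * f g ∈ zpowers z) (g : G) :
    ∃ k : ℤ, g = f g * z ^ k := by
  obtain ⟨k, hk⟩ := mem_zpowers_iff.mp (hf g)
  exact ⟨-k, by rw [zpow_neg, hk, mul_inv_rev, inv_inv, mul_inv_cancel_left]⟩

theorem mem_zpowers_of_map_mem_zpowers (hf : ∀ g, g⁻¹ * f g ∈ zpowers z) {g : G}
    (hg : f g ∈ zpowers z) : g ∈ zpowers z := by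
  obtain ⟨k, hk⟩ := exists_eq_map_mul_zpow hf g
  rw [hk]
  exact mul_mem hg (zpow_mem_zpowers z k)

theorem range_normal_of_mem_center (hz : z ∈ center G) (hf : ∀ g, g⁻¹ * f g ∈ zpowers z) :
    f.range.Normal where
  conj_mem := by
    rintro _ ⟨h, rfl⟩ g
    obtain ⟨k, hk⟩ := exists_eq_map_mul_zpow hf g
    have hzk : z ^ k ∈ center G := zpow_mem hz k
    refine ⟨g * h * g⁻¹, ?_⟩
    conv_rhs => rw [hk]
    simp only [map_mul, map_inv, mul_inv_rev, mul_assoc, ← mem_center_iff.mp hzk (f h),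
      mul_inv_cancel_left]

theorem injective_of_map_eq_zpow (hz : ¬IsOfFinOrder z) (hr : r ≠ 0)
    (hf : ∀ g, g⁻¹ * f g ∈ zpowers z) (hfz : f z = z ^ r) : Function.Injective f := by
  refine (injective_iff_map_eq_one f).mpr fun g hg => ?_
  obtain ⟨k, rfl⟩ := mem_zpowers_iff.mp <|
    mem_zpowers_of_map_mem_zpowers hf (hg ▸ one_mem (zpowers z))
  rw [map_zpow, hfz, ← zpow_mul, ← zpow_zero z] at hg
  rw [(mul_eq_zero.mp (injective_zpow_iff_not_isOfFinOrder.mpr hz hg)).resolve_left hr, zpow_zero]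

theorem finiteIndex_range (hz : z ∈ center G) (hr : r ≠ 0)
    (hf : ∀ g, g⁻¹ * f g ∈ zpowers z) (hfz : f z = z ^ r) : f.range.FiniteIndex := by
  have := range_normal_of_mem_center hz hf
  have hgen : ∀ x : G ⧸ f.range, x ∈ zpowers (z : G ⧸ f.range) := by
    intro x
    induction x using QuotientGroup.induction_on with | H g => ?_
    obtain ⟨k, hk⟩ := exists_eq_map_mul_zpow hf g
    refine ⟨k, ?_⟩
    rw [hk, QuotientGroup.mk_mul, (QuotientGroup.eq_one_iff (N := f.range) (f g)).mpr ⟨g, rfl⟩,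
      one_mul, QuotientGroup.mk_zpow]
  have hfin : IsOfFinOrder (z : G ⧸ f.range) :=
    isOfFinOrder_iff_zpow_eq_one.mpr
      ⟨r, hr, by rw [← QuotientGroup.mk_zpow, QuotientGroup.eq_one_iff]; exact ⟨z, hfz⟩⟩
  rw [finiteIndex_iff, index, ← orderOf_eq_card_of_forall_mem_zpowers hgen]
  exact hfin.orderOf_pos.ne'

theorem surjective_iff_of_map_eq_zpow (hz : ¬IsOfFinOrder z)
    (hf : ∀ g, g⁻¹ * f g ∈ zpowers z) (hfz : f z = z ^ r) :
    Function.Surjective f ↔ r = 1 ∨ r = -1 := by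
  constructor
  · intro hsurj
    obtain ⟨g, hg⟩ := hsurj z
    obtain ⟨k, rfl⟩ := mem_zpowers_iff.mp <|
      mem_zpowers_of_map_mem_zpowers hf (by rw [hg]; exact mem_zpowers z)
    rw [map_zpow, hfz, ← zpow_mul] at hg
    have hrk : r * k = 1 :=
      injective_zpow_iff_not_isOfFinOrder.mpr hz (hg.trans (zpow_one z).symm)
    exact Int.isUnit_iff.mp (IsUnit.of_mul_eq_one k hrk)
  · intro hr g
    have hrr : r * r = 1 := by rcases hr with rfl | rfl <;> rfl
    have hzr : z ∈ f.range := ⟨z ^ r, by rw [map_zpow, hfz, ← zpow_mul, hrr, zpow_one]⟩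
    obtain ⟨k, hk⟩ := exists_eq_map_mul_zpow hf g
    rw [← mem_range, hk]
    exact mul_mem ⟨g, rfl⟩ (zpow_mem hzr k)

end MonoidHom

namespace TorusKnotGroup

open PresentedGroup

variable {m n : ℕ}

theorem of_true_pow_eq : (of true : TorusKnotGroup m n) ^ n = of false ^ m := by
  have h : mk (torusKnotRels m n) (FreeGroup.of true ^ n * (FreeGroup.of false ^ m)⁻¹) = 1 :=
    (QuotientGroup.eq_one_iff _).mpr (subset_normalClosure rfl)
  simp only [map_mul, map_pow, map_inv, mul_inv_eq_one] at h
  exact h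

theorem of_true_pow_mem_center : (of true : TorusKnotGroup m n) ^ n ∈ center _ := by
  refine mem_center_iff.mpr fun g => mem_centralizer_singleton_iff.mp ?_
  refine generated_by _ _ (fun x => mem_centralizer_singleton_iff.mpr ?_) g
  cases x
  · rw [of_true_pow_eq]
    exact (Commute.self_pow _ m).eq
  · exact (Commute.self_pow _ n).eq

def degree : TorusKnotGroup m n →* Multiplicative ℤ :=
  toGroup (f := fun x => Multiplicative.ofAdd (cond x (m : ℤ) n)) <| by
    rintro _ rfl
    simp only [map_mul, map_pow, map_inv, FreeGroup.lift_apply_of, cond_true, cond_false]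
    rw [mul_inv_eq_one, ← ofAdd_nsmul, ← ofAdd_nsmul, nsmul_eq_mul, nsmul_eq_mul, mul_comm]

theorem not_isOfFinOrder_of_true_pow (hm : m ≠ 0) (hn : n ≠ 0) :
    ¬IsOfFinOrder ((of true : TorusKnotGroup m n) ^ n) := by
  rw [isOfFinOrder_pow, not_or]
  refine ⟨fun h => ?_, hn⟩
  have h1 := (isOfFinOrder_iff_eq_one _).mp (degree.isOfFinOrder h)
  rw [degree, toGroup.of, cond_true, ofAdd_eq_one, Nat.cast_eq_zero] at h1
  exact hm h1

def twist (p q : ℤ) (h : (n : ℤ) * p = m * q) : TorusKnotGroup m n →* TorusKnotGroup m n :=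
  toGroup (f := fun x => cond x (of true * (of true ^ n) ^ p) (of false * (of true ^ n) ^ q)) <| by
    rintro _ rfl
    simp only [map_mul, map_pow, map_inv, FreeGroup.lift_apply_of, cond_true, cond_false]
    rw [mul_inv_eq_one, mul_zpow_pow_of_mem_center of_true_pow_mem_center,
      mul_zpow_pow_of_mem_center of_true_pow_mem_center, h, of_true_pow_eq]

theorem twist_of_true (p q : ℤ) (h : (n : ℤ) * p = m * q) :
    twist p q h (of true) = of true * (of true ^ n) ^ p :=
  toGroup.of _

theorem twist_of_false (p q : ℤ) (h : (n : ℤ) * p = m * q) :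
    twist p q h (of false) = of false * (of true ^ n) ^ q :=
  toGroup.of _

theorem twist_of_true_pow (p q : ℤ) (h : (n : ℤ) * p = m * q) :
    twist p q h (of true ^ n) = (of true ^ n) ^ (1 + n * p) := by
  rw [map_pow, twist_of_true, mul_zpow_pow_of_mem_center of_true_pow_mem_center, zpow_add,
    zpow_one]

theorem inv_mul_twist_mem_zpowers (p q : ℤ) (h : (n : ℤ) * p = m * q) (g : TorusKnotGroup m n) :
    g⁻¹ * twist p q h g ∈ zpowers (of true ^ n) := by
  have := zpowers_normal_of_mem_center (of_true_pow_mem_center (m := m) (n := n))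
  have hmk : (QuotientGroup.mk' _).comp (twist p q h) =
      QuotientGroup.mk' (zpowers (of true ^ n)) := by
    refine PresentedGroup.ext fun x => ?_
    cases x
    · simp [twist_of_false]
    · simp [twist_of_true]
  exact QuotientGroup.eq.mp (DFunLike.congr_fun hmk g).symm

end TorusKnotGroup

theorem torusKnotGroup_endomorphism_general (m n : ℕ) (hm : 2 ≤ m) (hn : 2 ≤ n)
    (r p q : ℤ)
    (hp : (n : ℤ) * p = r - 1) (hq : (m : ℤ) * q = r - 1) :
    ∃ φ : TorusKnotGroup m n →* TorusKnotGroup m n,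
      φ (PresentedGroup.of true) =
          PresentedGroup.of true * (PresentedGroup.of (rels := torusKnotRels m n) true ^ n) ^ p ∧
      φ (PresentedGroup.of false) =
          PresentedGroup.of false * (PresentedGroup.of (rels := torusKnotRels m n) true ^ n) ^ q ∧
      Function.Injective φ ∧ φ.range.FiniteIndex ∧
      (Function.Surjective φ ↔ r = 1 ∨ r = -1) := by
  have hpq : (n : ℤ) * p = m * q := hp.trans hq.symm
  have hr : r ≠ 0 := by
    rintro rfl
    have : (n : ℤ) = 1 := Int.eq_one_of_dvd_one (by positivity) ⟨-p, by linarith⟩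
    omega
  have hz := TorusKnotGroup.of_true_pow_mem_center (m := m) (n := n)
  have hinf := TorusKnotGroup.not_isOfFinOrder_of_true_pow (m := m) (n := n) (by omega) (by omega)
  have hf := TorusKnotGroup.inv_mul_twist_mem_zpowers p q hpq
  have hfz : TorusKnotGroup.twist p q hpq (PresentedGroup.of true ^ n) =
      (PresentedGroup.of true ^ n) ^ r := by
    rw [TorusKnotGroup.twist_of_true_pow, hp, add_sub_cancel]
  exact ⟨TorusKnotGroup.twist p q hpq, TorusKnotGroup.twist_of_true p q hpq,
    TorusKnotGroup.twist_of_false p q hpq, MonoidHom.injective_of_map_eq_zpow hinf hr hf hfz,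
    MonoidHom.finiteIndex_range hz hr hf hfz, MonoidHom.surjective_iff_of_map_eq_zpow hinf hf hfz⟩

/-- In `Γ_{m,n} = ⟨a, b ∣ aⁿ = bᵐ⟩` with `m, n ≥ 2` coprime, set `z = aⁿ`.
If `r ≡ 1 (mod n)` and `r ≡ 1 (mod m)`, with `np = mq = r - 1`, then
`a ↦ a z^p`, `b ↦ b z^q` defines an injective endomorphism `φ` of `Γ_{m,n}`
whose image has finite index, and `φ` is surjective iff `r = ±1`. -/
theorem torusKnotGroup_endomorphism (m n : ℕ) (hm : 2 ≤ m) (hn : 2 ≤ n)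
    (hco : Nat.Coprime m n) (r p q : ℤ)
    (hp : (n : ℤ) * p = r - 1) (hq : (m : ℤ) * q = r - 1) :
    ∃ φ : TorusKnotGroup m n →* TorusKnotGroup m n,
      φ (PresentedGroup.of true) =
          PresentedGroup.of true * (PresentedGroup.of (rels := torusKnotRels m n) true ^ n) ^ p ∧
      φ (PresentedGroup.of false) =
          PresentedGroup.of false * (PresentedGroup.of (rels := torusKnotRels m n) true ^ n) ^ q ∧
      Function.Injective φ ∧ φ.range.FiniteIndex ∧
      (Function.Surjective φ ↔ r = 1 ∨ r = -1) :=
  torusKnotGroup_endomorphism_general m n hm hn r p q hp hq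
end

section
/- Let Γ = N ⋊_θ ℤ where N is cofinitely Hopfian, and let φ : Γ → Γ be an endomorphism with image of finite index such that φ(N) ≤ N. Then φ is injective, φ(Γ) is normal in Γ, and Γ/φ(Γ) is finite cyclic. -/
/-!
Since `φ` preserves `N`, it acts on the extension `1 → N → Γ → ℤ → 1`, inducing endomorphisms
`ρ` of `N` and `ψ` of `ℤ`. The image of `ψ` has finite index, so `ψ` is multiplication by a
nonzero integer and is injective; hence `φ(Γ) ∩ N = φ(N)`, so `ρ` has finite-index image and is
an automorphism because `N` is cofinitely Hopfian. Then `φ` is injective and `φ(Γ)` is the full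
preimage of `ψ(ℤ)`, which is normal with quotient the cyclic group `ℤ/ψ(ℤ)`.
-/

theorem MonoidHom.injective_of_finiteIndex_range {G : Type*} [Group G] [IsCyclic G]
    [IsMulTorsionFree G] [Infinite G] (ψ : G →* G) [hψ : ψ.range.FiniteIndex] :
    Function.Injective ψ := by
  obtain ⟨g, hg⟩ := IsCyclic.exists_generator (α := G)
  have hψg : ψ g ≠ 1 := by
    intro h
    have hbot : ψ.range = ⊥ := by
      rw [eq_bot_iff]
      rintro _ ⟨x, rfl⟩
      obtain ⟨k, rfl⟩ := Subgroup.mem_zpowers_iff.mp (hg x)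
      simp [h]
    have := hψ.index_ne_zero
    rw [hbot, Subgroup.index_bot, Nat.card_eq_zero_of_infinite] at this
    exact this rfl
  rw [injective_iff_map_eq_one]
  intro x hx
  obtain ⟨k, rfl⟩ := Subgroup.mem_zpowers_iff.mp (hg x)
  rw [map_zpow, IsMulTorsionFree.zpow_eq_one_iff_right hψg] at hx
  rw [hx, zpow_zero]

namespace GroupExtension

variable {N E G : Type*} [Group N] [Group E] [Group G] (S : GroupExtension N E G)
  {φ : E →* E} (hφ : S.inl.range.map φ ≤ S.inl.range)

noncomputable def leftMap : N →* N :=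
  (MonoidHom.ofInjective S.inl_injective).symm.toMonoidHom.comp
    ((φ.comp S.inl).codRestrict S.inl.range fun n ↦ hφ ⟨S.inl n, ⟨n, rfl⟩, rfl⟩)

theorem inl_leftMap (n : N) : S.inl (S.leftMap hφ n) = φ (S.inl n) :=
  MonoidHom.apply_ofInjective_symm S.inl_injective _

noncomputable def rightMap : G →* G :=
  S.rightHom.liftOfSurjective S.rightHom_surjective
    ⟨S.rightHom.comp φ, fun e he ↦ by
      rw [← S.range_inl_eq_ker_rightHom] at he
      rw [MonoidHom.mem_ker, MonoidHom.comp_apply, ← MonoidHom.mem_ker,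
        ← S.range_inl_eq_ker_rightHom]
      exact hφ ⟨e, he, rfl⟩⟩

theorem rightMap_rightHom (e : E) : S.rightMap hφ (S.rightHom e) = S.rightHom (φ e) :=
  MonoidHom.liftOfRightInverse_comp_apply _ _ _ _ e

theorem range_le_comap_range_rightMap : φ.range ≤ (S.rightMap hφ).range.comap S.rightHom := by
  rintro _ ⟨e, rfl⟩
  exact ⟨S.rightHom e, S.rightMap_rightHom hφ e⟩

theorem finiteIndex_range_rightMap [φ.range.FiniteIndex] :
    (S.rightMap hφ).range.FiniteIndex := by
  have := Subgroup.finiteIndex_of_le (S.range_le_comap_range_rightMap hφ)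
  rw [Subgroup.finiteIndex_iff, ← Subgroup.index_comap_of_surjective _ S.rightHom_surjective]
  exact this.index_ne_zero

theorem mem_range_inl_of_apply_mem {e : E} (hinj : Function.Injective (S.rightMap hφ))
    (he : φ e ∈ S.inl.range) : e ∈ S.inl.range := by
  rw [S.range_inl_eq_ker_rightHom, MonoidHom.mem_ker] at he ⊢
  rw [← S.rightMap_rightHom hφ] at he
  exact (map_eq_one_iff _ hinj).mp he

theorem range_leftMap_eq_comap (hinj : Function.Injective (S.rightMap hφ)) :
    (S.leftMap hφ).range = φ.range.comap S.inl := by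
  ext n
  constructor
  · rintro ⟨m, rfl⟩
    exact ⟨S.inl m, (S.inl_leftMap hφ m).symm⟩
  · rintro ⟨e, he⟩
    obtain ⟨m, rfl⟩ := S.mem_range_inl_of_apply_mem hφ hinj (by rw [he]; exact ⟨n, rfl⟩)
    exact ⟨m, S.inl_injective (by rw [S.inl_leftMap, he])⟩

theorem finiteIndex_range_leftMap [hfi : φ.range.FiniteIndex]
    (hinj : Function.Injective (S.rightMap hφ)) : (S.leftMap hφ).range.FiniteIndex := by
  rw [Subgroup.finiteIndex_iff, S.range_leftMap_eq_comap hφ hinj, Subgroup.index_comap]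
  exact fun h ↦ hfi.index_ne_zero (Subgroup.index_eq_zero_of_relIndex_eq_zero h)

theorem injective_of_injective_leftMap_rightMap (hl : Function.Injective (S.leftMap hφ))
    (hr : Function.Injective (S.rightMap hφ)) : Function.Injective φ := by
  rw [injective_iff_map_eq_one]
  intro e he
  obtain ⟨n, rfl⟩ := S.mem_range_inl_of_apply_mem hφ hr (he ▸ one_mem _)
  rw [← S.inl_leftMap hφ, ← map_one S.inl] at he
  rw [(map_eq_one_iff _ hl).mp (S.inl_injective he), map_one]

theorem range_inl_le_range (hsurj : Function.Surjective (S.leftMap hφ)) :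
    S.inl.range ≤ φ.range := by
  rintro _ ⟨n, rfl⟩
  obtain ⟨m, rfl⟩ := hsurj n
  exact ⟨S.inl m, (S.inl_leftMap hφ m).symm⟩

theorem range_eq_comap_range_rightMap (hsurj : Function.Surjective (S.leftMap hφ)) :
    φ.range = (S.rightMap hφ).range.comap S.rightHom := by
  refine le_antisymm (S.range_le_comap_range_rightMap hφ) ?_
  rintro e ⟨g, hg⟩
  obtain ⟨e', rfl⟩ := S.rightHom_surjective g
  rw [S.rightMap_rightHom] at hg
  have : e * (φ e')⁻¹ ∈ φ.range := by
    refine S.range_inl_le_range hφ hsurj ?_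
    rw [S.range_inl_eq_ker_rightHom, MonoidHom.mem_ker, map_mul, map_inv, hg, mul_inv_cancel]
  simpa using mul_mem this (⟨e', rfl⟩ : φ e' ∈ φ.range)

theorem exists_zpow_mul_mem_range_inl [IsCyclic G] :
    ∃ g : E, ∀ e, ∃ k : ℤ, g ^ k * e ∈ S.inl.range := by
  obtain ⟨q, hq⟩ := IsCyclic.exists_generator (α := G)
  obtain ⟨g, rfl⟩ := S.rightHom_surjective q
  refine ⟨g, fun e ↦ ?_⟩
  obtain ⟨k, hk⟩ := Subgroup.mem_zpowers_iff.mp (hq (S.rightHom e))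
  refine ⟨-k, ?_⟩
  rw [S.range_inl_eq_ker_rightHom, MonoidHom.mem_ker, map_mul, map_zpow, zpow_neg, hk,
    inv_mul_cancel]

end GroupExtension

/-- Let `Γ = N ⋊_θ ℤ` with `N` cofinitely Hopfian, and let `φ : Γ → Γ` be an
endomorphism with image of finite index such that `φ(N) ≤ N`.  Then `φ` is
injective, `φ(Γ)` is a normal subgroup of `Γ`, and the quotient `Γ/φ(Γ)` is
finite cyclic. -/
theorem semidirect_endomorphism_of_cofinitelyHopfian_kernel
    (N : Type*) [Group N] (hN : CofinitelyHopfian N) (θ : MulAut N)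
    (φ : Monoid.End (SemidirectProduct N (Multiplicative ℤ) (zpowersHom (MulAut N) θ)))
    (hfi : (φ : SemidirectProduct N (Multiplicative ℤ) (zpowersHom (MulAut N) θ) →*
        SemidirectProduct N (Multiplicative ℤ) (zpowersHom (MulAut N) θ)).range.FiniteIndex)
    (hφN : Subgroup.map (φ : SemidirectProduct N (Multiplicative ℤ) (zpowersHom (MulAut N) θ) →*
        SemidirectProduct N (Multiplicative ℤ) (zpowersHom (MulAut N) θ))
        SemidirectProduct.inl.range ≤ SemidirectProduct.inl.range) :
    Function.Injective φ ∧
    (φ : SemidirectProduct N (Multiplicative ℤ) (zpowersHom (MulAut N) θ) →*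
        SemidirectProduct N (Multiplicative ℤ) (zpowersHom (MulAut N) θ)).range.Normal ∧
    Finite (SemidirectProduct N (Multiplicative ℤ) (zpowersHom (MulAut N) θ) ⧸
      (φ : SemidirectProduct N (Multiplicative ℤ) (zpowersHom (MulAut N) θ) →*
        SemidirectProduct N (Multiplicative ℤ) (zpowersHom (MulAut N) θ)).range) ∧
    -- the quotient `Γ/φ(Γ)` is cyclic: some `g` generates it modulo `φ(Γ)`
    (∃ g, ∀ x, ∃ k : ℤ,
      g ^ k * x ∈ (φ : SemidirectProduct N (Multiplicative ℤ) (zpowersHom (MulAut N) θ) →*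
        SemidirectProduct N (Multiplicative ℤ) (zpowersHom (MulAut N) θ)).range) := by
  let S := SemidirectProduct.toGroupExtension (zpowersHom (MulAut N) θ)
  have hψfi := S.finiteIndex_range_rightMap hφN
  have hψ := (S.rightMap hφN).injective_of_finiteIndex_range
  have hρ : Function.Bijective (S.leftMap hφN) := hN _ (S.finiteIndex_range_leftMap hφN hψ)
  have hrange := S.range_eq_comap_range_rightMap hφN hρ.2
  obtain ⟨g, hg⟩ := S.exists_zpow_mul_mem_range_inl
  refine ⟨S.injective_of_injective_leftMap_rightMap hφN hρ.1 hψ,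
    hrange ▸ (Subgroup.normal_of_isMulCommutative _).comap _, inferInstance,
    g, fun x ↦ (hg x).imp fun _ hk ↦ S.range_inl_le_range hφN hρ.2 hk⟩
end
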